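/- Suppose P¹({∅}) > 0 and P²({∅}) > 0, and that for X₁, X₂ i.i.d. with distribution P¹⊗P² on X², the random variable φ^{coinc}_δ(X₁¹,X₁²) is not almost surely zero. Then the coincidence kernel h (defined via h(x,y) = ½(φ^{coinc}_δ(x¹,x²)+φ^{coinc}_δ(y¹,y²)−φ^{coinc}_δ(x¹,y²)−φ^{coinc}_δ(y¹,x²))) is non-degenerate under independence: Var(E[h(X₁,X₂) | X₁]) ≠ 0. In fact, E[h((∅,∅),X₂)] = ½ E[φ^{coinc}_δ(X₂¹,X₂²)] > 0. -/

import Mathlib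

open MeasureTheory ProbabilityTheory

instance : MeasurableSpace (Finset ℝ) := ⊤

/-- The coincidence count with delay `δ` (as a real number). -/
noncomputable def phiCoinc (δ : ℝ) (a b : Finset ℝ) : ℝ :=
  (((a ×ˢ b).filter (fun p => |p.1 - p.2| ≤ δ)).card : ℝ)

/-- The coincidence kernel `h_{φ^{coinc}_δ}`. -/
noncomputable def hCoinc (δ : ℝ) (x y : Finset ℝ × Finset ℝ) : ℝ :=
  (phiCoinc δ x.1 x.2 + phiCoinc δ y.1 y.2 - phiCoinc δ x.1 y.2 - phiCoinc δ y.1 x.2) / 2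

/-!
Under `μ = P¹ ⊗ P²`, the kernel `h_φ(x, y) = (φ(x) + φ(y) - φ(x¹, y²) - φ(y¹, x²)) / 2` has
mean zero under `μ ⊗ μ`: each of `(x¹, y²)` and `(y¹, x²)` is again `μ`-distributed, so the
four terms cancel. Hence `g(x) = E[h(x, X₂)]` is centred. Since both coordinates of `(∅, ∅)`
carry no points, `g(∅, ∅) = ½ E[φ(X₂)]`, which is positive as `φ ≥ 0` is not a.s. zero. The atom
`μ{(∅, ∅)} = P¹{∅} P²{∅} > 0` then prevents `g` from being a.s. constant, so `Var g ≠ 0`.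
-/

theorem MeasureTheory.MeasurePreserving.integral_comp_of_aestronglyMeasurable
    {α β : Type*} [MeasurableSpace α] [MeasurableSpace β] {μ : Measure α} {ν : Measure β}
    {f : α → β} (hf : MeasurePreserving f μ ν) {g : β → ℝ} (hg : AEStronglyMeasurable g ν) :
    ∫ x, g (f x) ∂μ = ∫ y, g y ∂ν := by
  rw [← hf.map_eq] at hg ⊢
  exact (integral_map hf.measurable.aemeasurable hg).symm

theorem integral_pos_of_nonneg_of_not_ae_eq_zero {Ω : Type*} [MeasurableSpace Ω]
    {μ : Measure Ω} {f : Ω → ℝ} (hf : 0 ≤ f) (hfi : Integrable f μ)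
    (hnz : ¬ ∀ᵐ x ∂μ, f x = 0) : 0 < ∫ x, f x ∂μ :=
  (integral_nonneg hf).lt_of_ne fun h0 => hnz ((integral_eq_zero_iff_of_nonneg hf hfi).mp h0.symm)

theorem ProbabilityTheory.variance_ne_zero_of_measure_singleton_ne_zero
    {Ω : Type*} [MeasurableSpace Ω] {μ : Measure Ω} [IsFiniteMeasure μ] {X : Ω → ℝ}
    (hX : MemLp X 2 μ) {ω : Ω} (hω : μ {ω} ≠ 0) (hne : X ω ≠ μ[X]) : Var[X; μ] ≠ 0 := by
  intro hvar
  have hnull : μ {x | ¬ X x = μ[X]} = 0 := ae_iff.mp (ae_eq_integral_of_variance_eq_zero hX hvar)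
  exact hω (measure_mono_null (Set.singleton_subset_iff.mpr hne) hnull)

section PairKernel

variable {α β : Type*} [MeasurableSpace α] [MeasurableSpace β]
  {P1 : Measure α} {P2 : Measure β} [IsProbabilityMeasure P1] [IsProbabilityMeasure P2]

noncomputable def pairKernel (φ : α → β → ℝ) (x y : α × β) : ℝ :=
  (φ x.1 x.2 + φ y.1 y.2 - φ x.1 y.2 - φ y.1 x.2) / 2

theorem measurePreserving_fst_snd :
    MeasurePreserving (fun z : (α × β) × (α × β) => (z.1.1, z.2.2))
      ((P1.prod P2).prod (P1.prod P2)) (P1.prod P2) :=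
  measurePreserving_fst.prod measurePreserving_snd

theorem measurePreserving_snd_fst :
    MeasurePreserving (fun z : (α × β) × (α × β) => (z.2.1, z.1.2))
      ((P1.prod P2).prod (P1.prod P2)) (P1.prod P2) :=
  measurePreserving_fst_snd.comp Measure.measurePreserving_swap

theorem integral_integral_pairKernel_eq_zero {φ : α → β → ℝ}
    (hφ : Integrable (fun p : α × β => φ p.1 p.2) (P1.prod P2)) :
    ∫ x, ∫ y, pairKernel φ x y ∂(P1.prod P2) ∂(P1.prod P2) = 0 := by
  set μ := P1.prod P2
  have hA : Integrable (fun z : (α × β) × (α × β) => φ z.1.1 z.1.2) (μ.prod μ) :=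
    measurePreserving_fst.integrable_comp_of_integrable hφ
  have hB : Integrable (fun z : (α × β) × (α × β) => φ z.2.1 z.2.2) (μ.prod μ) :=
    measurePreserving_snd.integrable_comp_of_integrable hφ
  have hC : Integrable (fun z : (α × β) × (α × β) => φ z.1.1 z.2.2) (μ.prod μ) :=
    measurePreserving_fst_snd.integrable_comp_of_integrable hφ
  have hD : Integrable (fun z : (α × β) × (α × β) => φ z.2.1 z.1.2) (μ.prod μ) :=
    measurePreserving_snd_fst.integrable_comp_of_integrable hφ
  have hAB : Integrable (fun z : (α × β) × (α × β) => φ z.1.1 z.1.2 + φ z.2.1 z.2.2) (μ.prod μ) :=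
    hA.add hB
  have hABC : Integrable
      (fun z : (α × β) × (α × β) => φ z.1.1 z.1.2 + φ z.2.1 z.2.2 - φ z.1.1 z.2.2) (μ.prod μ) :=
    hAB.sub hC
  have hm := hφ.aestronglyMeasurable
  have hIA : ∫ z, φ z.1.1 z.1.2 ∂(μ.prod μ) = ∫ x, φ x.1 x.2 ∂μ :=
    measurePreserving_fst.integral_comp_of_aestronglyMeasurable hm
  have hIB : ∫ z, φ z.2.1 z.2.2 ∂(μ.prod μ) = ∫ x, φ x.1 x.2 ∂μ :=
    measurePreserving_snd.integral_comp_of_aestronglyMeasurable hm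
  have hIC : ∫ z, φ z.1.1 z.2.2 ∂(μ.prod μ) = ∫ x, φ x.1 x.2 ∂μ :=
    measurePreserving_fst_snd.integral_comp_of_aestronglyMeasurable hm
  have hID : ∫ z, φ z.2.1 z.1.2 ∂(μ.prod μ) = ∫ x, φ x.1 x.2 ∂μ :=
    measurePreserving_snd_fst.integral_comp_of_aestronglyMeasurable hm
  rw [integral_integral ((hABC.sub hD).div_const 2)]
  simp only [pairKernel]
  rw [integral_div, integral_sub hABC hD, integral_sub hAB hC, integral_add hA hB,
    hIA, hIB, hIC, hID]
  ring

end PairKernel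

theorem phiCoinc_nonneg (δ : ℝ) (a b : Finset ℝ) : 0 ≤ phiCoinc δ a b := by
  unfold phiCoinc
  positivity

theorem hCoinc_eq_pairKernel (δ : ℝ) : hCoinc δ = pairKernel (phiCoinc δ) := rfl

theorem hCoinc_empty_left (δ : ℝ) (y : Finset ℝ × Finset ℝ) :
    hCoinc δ (∅, ∅) y = 1 / 2 * phiCoinc δ y.1 y.2 := by
  simp only [hCoinc, phiCoinc, Finset.empty_product, Finset.product_empty, Finset.filter_empty,
    Finset.card_empty, Nat.cast_zero]
  ring

theorem stmt_10_general (δ : ℝ)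
    (P1 P2 : Measure (Finset ℝ)) [IsProbabilityMeasure P1] [IsProbabilityMeasure P2]
    (h1 : 0 < P1 {(∅ : Finset ℝ)}) (h2 : 0 < P2 {(∅ : Finset ℝ)})
    (hint : Integrable (fun p : Finset ℝ × Finset ℝ => phiCoinc δ p.1 p.2) (P1.prod P2))
    (hL2 : MemLp (fun x : Finset ℝ × Finset ℝ =>
      ∫ y, hCoinc δ x y ∂(P1.prod P2)) 2 (P1.prod P2))
    (hnz : ¬ (∀ᵐ p ∂(P1.prod P2), phiCoinc δ p.1 p.2 = 0)) :
    variance (fun x : Finset ℝ × Finset ℝ =>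
        ∫ y, hCoinc δ x y ∂(P1.prod P2)) (P1.prod P2) ≠ 0 ∧
      (∫ y, hCoinc δ (∅, ∅) y ∂(P1.prod P2))
        = (1 / 2) * ∫ p, phiCoinc δ p.1 p.2 ∂(P1.prod P2) ∧
      0 < ∫ y, hCoinc δ (∅, ∅) y ∂(P1.prod P2) := by
  have hempty : ∫ y, hCoinc δ (∅, ∅) y ∂(P1.prod P2)
      = 1 / 2 * ∫ p, phiCoinc δ p.1 p.2 ∂(P1.prod P2) := by
    simp_rw [hCoinc_empty_left]
    exact integral_const_mul _ _
  have hφpos : 0 < ∫ p, phiCoinc δ p.1 p.2 ∂(P1.prod P2) :=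
    integral_pos_of_nonneg_of_not_ae_eq_zero (fun p => phiCoinc_nonneg δ p.1 p.2) hint hnz
  have hpos : 0 < ∫ y, hCoinc δ (∅, ∅) y ∂(P1.prod P2) := by
    rw [hempty]
    positivity
  have hcentred : ∫ x, ∫ y, hCoinc δ x y ∂(P1.prod P2) ∂(P1.prod P2) = 0 :=
    hCoinc_eq_pairKernel δ ▸ integral_integral_pairKernel_eq_zero hint
  have hatom : P1.prod P2 {(∅, ∅)} ≠ 0 := by
    rw [← Set.singleton_prod_singleton, Measure.prod_prod]
    exact mul_ne_zero h1.ne' h2.ne'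
  refine ⟨variance_ne_zero_of_measure_singleton_ne_zero hL2 hatom ?_, hempty, hpos⟩
  rw [hcentred]
  exact hpos.ne'

/-- If `P¹({∅}) > 0`, `P²({∅}) > 0` and the coincidence count is not a.s. zero under
`P¹⊗P²`, then the coincidence kernel is non-degenerate under independence:
`Var(E[h(X₁,X₂)|X₁]) ≠ 0`; in fact `E[h((∅,∅),X₂)] = ½E[φ^{coinc}_δ(X₂¹,X₂²)] > 0`. -/
theorem stmt_10 (δ : ℝ) (hδ : 0 < δ)
    (P1 P2 : Measure (Finset ℝ)) [IsProbabilityMeasure P1] [IsProbabilityMeasure P2]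
    (h1 : 0 < P1 {(∅ : Finset ℝ)}) (h2 : 0 < P2 {(∅ : Finset ℝ)})
    (hint : Integrable (fun p : Finset ℝ × Finset ℝ => phiCoinc δ p.1 p.2) (P1.prod P2))
    (hL2 : MemLp (fun x : Finset ℝ × Finset ℝ =>
      ∫ y, hCoinc δ x y ∂(P1.prod P2)) 2 (P1.prod P2))
    (hnz : ¬ (∀ᵐ p ∂(P1.prod P2), phiCoinc δ p.1 p.2 = 0)) :
    variance (fun x : Finset ℝ × Finset ℝ =>
        ∫ y, hCoinc δ x y ∂(P1.prod P2)) (P1.prod P2) ≠ 0 ∧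
      (∫ y, hCoinc δ (∅, ∅) y ∂(P1.prod P2))
        = (1 / 2) * ∫ p, phiCoinc δ p.1 p.2 ∂(P1.prod P2) ∧
      0 < ∫ y, hCoinc δ (∅, ∅) y ∂(P1.prod P2) :=
  stmt_10_general δ P1 P2 h1 h2 hint hL2 hnz
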